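/- Fix positive integers m and n with n ≥ 2, set γ = 2(m+n+1)/(n−1), and for R > 1 define T_R = {x ∈ ℝⁿ : t := (x₁+⋯+xₙ)/n > R and |xⱼ − t| < e^{−γt} for all j = 1,…,n}. Then for every multi-index α ∈ ℕⁿ there exist constants C̃_α, C_α > 0, depending only on α, m, n (and independent of R), such that, as elements of [0,∞], C̃_α ∫_R^∞ e^{2(|α|−m−1)u} du ≤ ∫_{T_R} e^{2⟨α+𝟏,x⟩} dx ≤ C_α ∫_R^∞ e^{2(|α|−m−1)u} du. Consequently: (i) if |α| ≤ m then ∫_{T_R} e^{2⟨α+𝟏,x⟩} dx < ∞ and this integral tends to 0 as R → ∞; (ii) if |α| ≥ m+1 then ∫_{T_R} e^{2⟨α+𝟏,x⟩} dx = +∞. -/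

import Mathlib

open MeasureTheory Real ENNReal

/-- The tail domain `T_R` with `γ = 2(m+n+1)/(n−1)`:
`T_R = {x ∈ ℝⁿ : t := (x₁+⋯+xₙ)/n > R, |xⱼ − t| < e^{−γt} for all j}`. -/
def tailSet (m n : ℕ) (R : ℝ) : Set (Fin n → ℝ) :=
  {x | R < (∑ j, x j) / n ∧
    ∀ j, |x j - (∑ j, x j) / n| <
      Real.exp (-(2 * ((m : ℝ) + n + 1) / ((n : ℝ) - 1)) * ((∑ j, x j) / n))}

/-- `∫_{T_R} e^{2⟨α+𝟏,x⟩} dx`, as an element of `[0,∞]`. -/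
noncomputable def tailIntegral (m n : ℕ) (α : Fin n → ℕ) (R : ℝ) : ℝ≥0∞ :=
  ∫⁻ x in tailSet m n R, ENNReal.ofReal (Real.exp (2 * ∑ j, ((α j : ℝ) + 1) * x j))

/-! Both bounds come from squeezing `T_R` between two tubes around the diagonal, parametrised by
the first coordinate `s = x₀`: `{x : R + 1 < x₀, |xᵢ - x₀| < c₁ e^{-γ x₀}}` inside `T_R`, and `T_R`
inside `{x : R - 1 < x₀, |xᵢ - x₀| < c₂ e^{-γ x₀}}`. On such a tube `⟨α+𝟏,x⟩ = (|α| + n) x₀ + O(1)`,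
and by Fubini the slice over `x₀ = s` has volume `≍ e^{-(n-1)γ s}`. Since
`(n-1)γ = 2(m+n+1)`, both tube integrals are constant multiples of `∫_R^∞ e^{2(|α|-m-1)u} du`,
which is finite and tends to `0` for `|α| ≤ m` and is infinite otherwise. -/

open Set Filter Topology

theorem abs_sum_mul_sub_mul_le {ι : Type*} [Fintype ι] {w x : ι → ℝ} {c d : ℝ}
    (hw : ∀ j, 0 ≤ w j) (hx : ∀ j, |x j - c| ≤ d) :
    |∑ j, w j * x j - (∑ j, w j) * c| ≤ (∑ j, w j) * d := by
  rw [Finset.sum_mul, ← Finset.sum_sub_distrib, Finset.sum_mul]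
  refine (Finset.abs_sum_le_sum_abs _ _).trans (Finset.sum_le_sum fun j _ => ?_)
  rw [← mul_sub, abs_mul, abs_of_nonneg (hw j)]
  exact mul_le_mul_of_nonneg_left (hx j) (hw j)

theorem abs_sum_div_sub_le {n : ℕ} (hn : n ≠ 0) {x : Fin n → ℝ} {c d : ℝ}
    (hx : ∀ j, |x j - c| ≤ d) : |(∑ j, x j) / n - c| ≤ d := by
  have hn' : (0 : ℝ) < n := by positivity
  have h := abs_sum_mul_sub_mul_le (w := fun _ => (1 : ℝ)) (fun _ => zero_le_one) hx
  simp only [one_mul, Finset.sum_const, Finset.card_univ, Fintype.card_fin, nsmul_eq_mul,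
    mul_one] at h
  rwa [div_sub' hn'.ne', abs_div, abs_of_pos hn', div_le_iff₀ hn', mul_comm d]

def tube (k : ℕ) (a : ℝ) (r : ℝ → ℝ) : Set (Fin (k + 1) → ℝ) :=
  {x | a < x 0 ∧ ∀ i : Fin k, |x i.succ - x 0| < r (x 0)}

theorem abs_sub_lt_of_mem_tube {k : ℕ} {a : ℝ} {r : ℝ → ℝ} {x : Fin (k + 1) → ℝ}
    (hx : x ∈ tube k a r) (hr : 0 < r (x 0)) (j : Fin (k + 1)) : |x j - x 0| < r (x 0) := by
  induction j using Fin.cases with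
  | zero => simpa using hr
  | succ i => exact hx.2 i

theorem setLIntegral_tube {g : ℝ → ℝ≥0∞} (hg : Measurable g) {r : ℝ → ℝ} (hr : Measurable r)
    (k : ℕ) (a : ℝ) :
    ∫⁻ x in tube k a r, g (x 0) = ∫⁻ s in Ioi a, g s * ENNReal.ofReal (2 * r s) ^ k := by
  let P : Set (ℝ × (Fin k → ℝ)) := {p | a < p.1 ∧ ∀ i, |p.2 i - p.1| < r p.1}
  have hP : MeasurableSet P := by
    simp only [P, ofPred_and, ofPred_forall]
    exact (measurableSet_lt measurable_const measurable_fst).inter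
      (.iInter fun i => measurableSet_lt (by fun_prop) (by fun_prop))
  have hslice (s : ℝ) (hs : a < s) : Prod.mk s ⁻¹' P = univ.pi fun _ => Metric.ball s (r s) := by
    ext y; simp [P, hs, Real.dist_eq]
  have htube : tube k a r = MeasurableEquiv.piFinSuccAbove (fun _ => ℝ) 0 ⁻¹' P := by
    ext x
    simp [tube, P, MeasurableEquiv.piFinSuccAbove_apply, Fin.insertNthEquiv, Fin.tail]
  have hgP : Measurable (P.indicator fun p => g p.1) := (hg.comp measurable_fst).indicator hP
  rw [htube]
  refine ((volume_preserving_piFinSuccAbove (fun _ => ℝ) 0).setLIntegral_comp_preimage hP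
    (f := fun p => g p.1) (hg.comp measurable_fst)).trans ?_
  rw [← lintegral_indicator hP, Measure.volume_eq_prod,
    lintegral_prod _ hgP.aemeasurable, ← lintegral_indicator measurableSet_Ioi]
  refine lintegral_congr fun s => ?_
  by_cases hs : a < s
  · have : (fun y => P.indicator (fun p => g p.1) (s, y)) =
        (univ.pi fun _ : Fin k => Metric.ball s (r s)).indicator fun _ => g s := by
      rw [← hslice s hs]; rfl
    rw [this, lintegral_indicator_const (.univ_pi fun _ => measurableSet_ball), volume_pi_pi,
      indicator_of_mem (mem_Ioi.2 hs)]
    simp [Real.volume_ball]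
  · rw [indicator_of_notMem (by simpa using hs)]
    exact lintegral_eq_zero_of_ae_eq_zero
      (ae_of_all _ fun y => indicator_of_notMem (by simp [P, hs]) _)

theorem setLIntegral_Ioi_ofReal_exp (b a R : ℝ) :
    ∫⁻ s in Ioi a, ENNReal.ofReal (exp (b * s)) =
      ENNReal.ofReal (exp (b * (a - R))) * ∫⁻ s in Ioi R, ENNReal.ofReal (exp (b * s)) := by
  have hshift := (measurePreserving_add_right volume (a - R)).setLIntegral_comp_preimage
    measurableSet_Ioi (s := Ioi a) (f := fun s => ENNReal.ofReal (exp (b * s))) (by fun_prop)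
  have hpre : (· + (a - R)) ⁻¹' Ioi a = Ioi R := by ext; simp
  rw [← hshift, hpre, ← lintegral_const_mul _ (by fun_prop)]
  refine lintegral_congr fun s => ?_
  rw [← ENNReal.ofReal_mul (exp_pos _).le, ← exp_add]
  ring

theorem setLIntegral_Ioi_ofReal_exp_of_neg {b : ℝ} (hb : b < 0) (R : ℝ) :
    ∫⁻ s in Ioi R, ENNReal.ofReal (exp (b * s)) = ENNReal.ofReal (exp (b * R) / -b) := by
  rw [← ofReal_integral_eq_lintegral_ofReal (exp_neg_integrableOn_Ioi R (neg_pos.2 hb) |>.congr_fun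
      (fun s _ => by ring_nf) measurableSet_Ioi) (ae_of_all _ fun s => (exp_pos _).le),
    integral_exp_mul_Ioi hb, neg_div, div_neg]

theorem setLIntegral_Ioi_ofReal_exp_of_nonneg {b : ℝ} (hb : 0 ≤ b) (R : ℝ) :
    ∫⁻ s in Ioi R, ENNReal.ofReal (exp (b * s)) = ⊤ := by
  refine eq_top_iff.2 (le_trans ?_ (setLIntegral_mono' measurableSet_Ioi fun s hs =>
    ENNReal.ofReal_le_ofReal (exp_le_exp.2 (mul_le_mul_of_nonneg_left (le_of_lt hs) hb))))
  rw [setLIntegral_const, Real.volume_Ioi, ENNReal.mul_top (by simp [exp_pos])]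

theorem tendsto_setLIntegral_Ioi_ofReal_exp {b : ℝ} (hb : b < 0) :
    Tendsto (fun R => ∫⁻ s in Ioi R, ENNReal.ofReal (exp (b * s))) atTop (𝓝 0) := by
  simp_rw [setLIntegral_Ioi_ofReal_exp_of_neg hb]
  rw [← ENNReal.ofReal_zero, ← zero_div (-b)]
  exact ENNReal.tendsto_ofReal (((tendsto_exp_atBot.comp
    (tendsto_id.const_mul_atTop_of_neg hb))).div_const _)

theorem setLIntegral_tube_ofReal_exp (k : ℕ) {c : ℝ} (hc : 0 ≤ c) (a γ β κ R : ℝ) :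
    ∫⁻ x in tube k a (fun s => c * exp (-γ * s)), ENNReal.ofReal (exp (β * x 0 + κ)) =
      ENNReal.ofReal (exp (κ + (β - k * γ) * (a - R)) * (2 * c) ^ k) *
        ∫⁻ s in Ioi R, ENNReal.ofReal (exp ((β - k * γ) * s)) := by
  have hpow (s : ℝ) :
      ENNReal.ofReal (exp (β * s + κ)) * ENNReal.ofReal (2 * (c * exp (-γ * s))) ^ k =
        ENNReal.ofReal (exp κ * (2 * c) ^ k) * ENNReal.ofReal (exp ((β - k * γ) * s)) := by
    rw [← ENNReal.ofReal_pow (by positivity), ← ENNReal.ofReal_mul (by positivity),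
      ← ENNReal.ofReal_mul (by positivity), mul_pow, mul_pow, ← exp_nat_mul,
      show (β - k * γ) * s = β * s + k * (-γ * s) by ring, exp_add, exp_add]
    ring
  rw [setLIntegral_tube (g := fun s => ENNReal.ofReal (exp (β * s + κ))) (by fun_prop)
    (by fun_prop), lintegral_congr hpow, lintegral_const_mul _ (by fun_prop),
    setLIntegral_Ioi_ofReal_exp _ a R, ← mul_assoc,
    ← ENNReal.ofReal_mul (by positivity), exp_add]
  ring

noncomputable def tailExponent (m n : ℕ) : ℝ := 2 * ((m : ℝ) + n + 1) / ((n : ℝ) - 1)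

theorem two_mul_sum_sub_mul_tailExponent (m : ℕ) {k : ℕ} (hk : k ≠ 0) (α : Fin (k + 1) → ℕ) :
    2 * ∑ j, ((α j : ℝ) + 1) - k * tailExponent m (k + 1) =
      2 * (((∑ j, α j : ℕ) : ℝ) - m - 1) := by
  have hk' : (k : ℝ) ≠ 0 := by exact_mod_cast hk
  simp only [tailExponent, Finset.sum_add_distrib, Finset.sum_const, Finset.card_univ,
    Fintype.card_fin, Nat.cast_add_one, add_sub_cancel_right]
  push_cast
  field_simp
  ring

section TailSet

variable (m k : ℕ)

theorem mem_tailSet_iff {n : ℕ} {R : ℝ} {x : Fin n → ℝ} :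
    x ∈ tailSet m n R ↔ R < (∑ j, x j) / n ∧
      ∀ j, |x j - (∑ j, x j) / n| < exp (-tailExponent m n * ((∑ j, x j) / n)) :=
  Iff.rfl

theorem tailExponent_nonneg : 0 ≤ tailExponent m (k + 1) :=
  div_nonneg (by positivity) (by push_cast; linarith)

theorem tube_subset_tailSet {R : ℝ} (hR : 0 ≤ R) :
    tube k (R + 1) (fun s => exp (-tailExponent m (k + 1)) / 2 *
      exp (-tailExponent m (k + 1) * s)) ⊆ tailSet m (k + 1) R := by
  intro x hx
  set γ := tailExponent m (k + 1)
  set t := (∑ j, x j) / ((k + 1 : ℕ) : ℝ)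
  set δ := exp (-γ) / 2 * exp (-γ * x 0) with hδ
  have hγ : 0 ≤ γ := tailExponent_nonneg m k
  have h2δ : 2 * δ = exp (-γ * (x 0 + 1)) := by
    rw [hδ, show -γ * (x 0 + 1) = -γ + -γ * x 0 by ring, exp_add]; ring
  have hδ1 : 2 * δ ≤ 1 := by
    rw [h2δ, exp_le_one_iff]; nlinarith [hx.1]
  have hxj := abs_sub_lt_of_mem_tube hx (by positivity)
  have ht := abs_le.1 (abs_sum_div_sub_le (Nat.add_one_ne_zero k) fun j => (hxj j).le)
  refine (mem_tailSet_iff m).2 ⟨by linarith [hx.1], fun j => ?_⟩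
  calc |x j - t| ≤ |x j - x 0| + |t - x 0| := by
        rw [abs_sub_comm t]; exact abs_sub_le _ _ _
    _ < δ + δ := add_lt_add_of_lt_of_le (hxj j) (abs_le.2 ht)
    _ = exp (-γ * (x 0 + 1)) := by rw [← h2δ]; ring
    _ ≤ exp (-γ * t) := exp_le_exp.2 (by nlinarith)

theorem abs_sub_lt_of_mem_tailSet {R : ℝ} {x : Fin (k + 1) → ℝ}
    (hx : x ∈ tailSet m (k + 1) R) (i j : Fin (k + 1)) :
    |x i - x j| < 2 * exp (-tailExponent m (k + 1) * ((∑ j, x j) / ((k + 1 : ℕ) : ℝ))) := by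
  obtain ⟨-, hxt⟩ := (mem_tailSet_iff m).1 hx
  calc |x i - x j| ≤ |x i - (∑ j, x j) / ((k + 1 : ℕ) : ℝ)| +
        |x j - (∑ j, x j) / ((k + 1 : ℕ) : ℝ)| := by
        rw [abs_sub_comm (x j)]; exact abs_sub_le _ _ _
    _ < _ := by linarith [hxt i, hxt j]

theorem tailSet_subset_tube {R : ℝ} (hR : 0 ≤ R) :
    tailSet m (k + 1) R ⊆ tube k (R - 1) (fun s => 2 * exp (tailExponent m (k + 1)) *
      exp (-tailExponent m (k + 1) * s)) := by
  intro x hx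
  obtain ⟨htR, hxt⟩ := (mem_tailSet_iff m).1 hx
  set γ := tailExponent m (k + 1)
  set t := (∑ j, x j) / ((k + 1 : ℕ) : ℝ)
  have hγ : 0 ≤ γ := tailExponent_nonneg m k
  have hexp : exp (-γ * t) ≤ 1 := exp_le_one_iff.2 (by nlinarith)
  have h0 := abs_lt.1 ((hxt 0).trans_le hexp)
  refine ⟨by linarith, fun i => (abs_sub_lt_of_mem_tailSet m k hx i.succ 0).trans_le ?_⟩
  show 2 * exp (-γ * t) ≤ 2 * exp γ * exp (-γ * x 0)
  rw [mul_assoc, ← exp_add]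
  gcongr
  nlinarith

end TailSet

section Bounds

variable (m : ℕ) {k : ℕ} (α : Fin (k + 1) → ℕ)

theorem exists_le_tailIntegral (hk : k ≠ 0) :
    ∃ C > 0, ∀ R, 0 ≤ R → ENNReal.ofReal C *
      ∫⁻ u in Ioi R, ENNReal.ofReal (exp (2 * (((∑ j, α j : ℕ) : ℝ) - m - 1) * u)) ≤
        tailIntegral m (k + 1) α R := by
  set γ := tailExponent m (k + 1)
  set A := ∑ j, ((α j : ℝ) + 1)
  have hb := two_mul_sum_sub_mul_tailExponent m hk α
  have hγ : 0 ≤ γ := tailExponent_nonneg m k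
  refine ⟨exp (-(2 * A) + (2 * A - k * γ) * 1) * (2 * (exp (-γ) / 2)) ^ k, by positivity,
    fun R hR => ?_⟩
  have htube := setLIntegral_tube_ofReal_exp k (c := exp (-γ) / 2) (by positivity) (R + 1) γ
    (2 * A) (-(2 * A)) R
  rw [add_sub_cancel_left, hb] at htube
  rw [hb]
  calc _ = _ := htube.symm
    _ ≤ ∫⁻ x in tube k (R + 1) (fun s => exp (-γ) / 2 * exp (-γ * s)),
          ENNReal.ofReal (exp (2 * ∑ j, ((α j : ℝ) + 1) * x j)) := by
      refine setLIntegral_mono (by fun_prop) fun x hx => ENNReal.ofReal_le_ofReal ?_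
      have hwidth : exp (-γ) / 2 * exp (-γ * x 0) ≤ 1 := by
        have h1 := exp_le_one_iff.2 (neg_nonpos.2 hγ)
        have h2 := exp_le_one_iff.2 (by nlinarith [hx.1] : -γ * x 0 ≤ 0)
        nlinarith [exp_pos (-γ), exp_pos (-γ * x 0)]
      have h := abs_sum_mul_sub_mul_le (w := fun j => (α j : ℝ) + 1) (fun j => by positivity)
        fun j => ((abs_sub_lt_of_mem_tube hx (by positivity) j).trans_le hwidth).le
      exact exp_le_exp.2 (by linarith [(abs_le.1 h).1])
    _ ≤ tailIntegral m (k + 1) α R := lintegral_mono_set (tube_subset_tailSet m k hR)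

theorem exists_tailIntegral_le (hk : k ≠ 0) :
    ∃ C > 0, ∀ R, 0 ≤ R → tailIntegral m (k + 1) α R ≤ ENNReal.ofReal C *
      ∫⁻ u in Ioi R, ENNReal.ofReal (exp (2 * (((∑ j, α j : ℕ) : ℝ) - m - 1) * u)) := by
  set γ := tailExponent m (k + 1)
  set A := ∑ j, ((α j : ℝ) + 1)
  have hb := two_mul_sum_sub_mul_tailExponent m hk α
  have hγ : 0 ≤ γ := tailExponent_nonneg m k
  refine ⟨exp (2 * A * 2 + (2 * A - k * γ) * (-1)) * (2 * (2 * exp γ)) ^ k, by positivity,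
    fun R hR => ?_⟩
  have htube := setLIntegral_tube_ofReal_exp k (c := 2 * exp γ) (by positivity) (R - 1) γ
    (2 * A) (2 * A * 2) R
  rw [sub_sub_cancel_left, hb] at htube
  rw [hb]
  calc tailIntegral m (k + 1) α R
      ≤ ∫⁻ x in tailSet m (k + 1) R, ENNReal.ofReal (exp (2 * A * x 0 + 2 * A * 2)) := by
        refine setLIntegral_mono (by fun_prop) fun x hx => ENNReal.ofReal_le_ofReal ?_
        have hexp : exp (-γ * ((∑ j, x j) / ((k + 1 : ℕ) : ℝ))) ≤ 1 :=
          exp_le_one_iff.2 (by nlinarith [((mem_tailSet_iff m).1 hx).1])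
        have h := abs_sum_mul_sub_mul_le (w := fun j => (α j : ℝ) + 1) (d := 2)
          (fun j => by positivity)
          fun j => ((abs_sub_lt_of_mem_tailSet m k hx j 0).trans_le (by linarith)).le
        exact exp_le_exp.2 (by linarith [(abs_le.1 h).2])
    _ ≤ _ := lintegral_mono_set (tailSet_subset_tube m k hR)
    _ = _ := htube

end Bounds

theorem stmt6_general (m n : ℕ) (hn : 2 ≤ n) (α : Fin n → ℕ) :
    (∃ Ctil Cα : ℝ, 0 < Ctil ∧ 0 < Cα ∧
      ∀ R : ℝ, 1 < R →
        ENNReal.ofReal Ctil *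
            (∫⁻ u in Set.Ioi R,
              ENNReal.ofReal (Real.exp (2 * (((∑ j, α j : ℕ) : ℝ) - m - 1) * u)))
          ≤ tailIntegral m n α R ∧
        tailIntegral m n α R ≤
          ENNReal.ofReal Cα *
            (∫⁻ u in Set.Ioi R,
              ENNReal.ofReal (Real.exp (2 * (((∑ j, α j : ℕ) : ℝ) - m - 1) * u)))) ∧
    ((∑ j, α j ≤ m →
        (∀ R : ℝ, 1 < R → tailIntegral m n α R < ⊤) ∧
        Filter.Tendsto (tailIntegral m n α) Filter.atTop (nhds 0)) ∧
      (m + 1 ≤ ∑ j, α j → ∀ R : ℝ, 1 < R → tailIntegral m n α R = ⊤)) := by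
  obtain ⟨k, rfl⟩ : ∃ k, n = k + 1 := ⟨n - 1, by omega⟩
  have hk : k ≠ 0 := by omega
  obtain ⟨Ctil, hCtil, hlower⟩ := exists_le_tailIntegral m α hk
  obtain ⟨Cα, hCα, hupper⟩ := exists_tailIntegral_le m α hk
  refine ⟨⟨Ctil, Cα, hCtil, hCα, fun R hR => ⟨hlower R (by linarith), hupper R (by linarith)⟩⟩,
    fun hα => ?_, fun hα R hR => ?_⟩
  · have hb : 2 * (((∑ j, α j : ℕ) : ℝ) - m - 1) < 0 := by
      have : ((∑ j, α j : ℕ) : ℝ) ≤ m := by exact_mod_cast hα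
      linarith
    refine ⟨fun R hR => (hupper R (by linarith)).trans_lt ?_, ?_⟩
    · rw [setLIntegral_Ioi_ofReal_exp_of_neg hb]
      exact ENNReal.mul_lt_top ENNReal.ofReal_lt_top ENNReal.ofReal_lt_top
    · have hlim := ENNReal.Tendsto.const_mul (tendsto_setLIntegral_Ioi_ofReal_exp hb)
        (Or.inr (ENNReal.ofReal_ne_top (r := Cα)))
      rw [mul_zero] at hlim
      exact tendsto_of_tendsto_of_tendsto_of_le_of_le' tendsto_const_nhds hlim
        (.of_forall fun R => zero_le) ((eventually_ge_atTop 0).mono hupper)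
  · have hb : 0 ≤ 2 * (((∑ j, α j : ℕ) : ℝ) - m - 1) := by
      have : (m : ℝ) + 1 ≤ ((∑ j, α j : ℕ) : ℝ) := by exact_mod_cast hα
      linarith
    have h := hlower R (by linarith)
    rwa [setLIntegral_Ioi_ofReal_exp_of_nonneg hb, ENNReal.mul_top (by simpa using hCtil),
      top_le_iff] at h

/-- For `n ≥ 2` and any multi-index `α ∈ ℕⁿ` there are constants
`C̃_α, C_α > 0` independent of `R` such that, for all `R > 1`,
`C̃_α ∫_R^∞ e^{2(|α|−m−1)u} du ≤ ∫_{T_R} e^{2⟨α+𝟏,x⟩} dx ≤ C_α ∫_R^∞ e^{2(|α|−m−1)u} du`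
in `[0,∞]`. Consequently: (i) if `|α| ≤ m` the integral is finite and tends to `0` as
`R → ∞`; (ii) if `|α| ≥ m+1` the integral is `+∞`. -/
theorem stmt6 (m n : ℕ) (hm : 0 < m) (hn : 2 ≤ n) (α : Fin n → ℕ) :
    (∃ Ctil Cα : ℝ, 0 < Ctil ∧ 0 < Cα ∧
      ∀ R : ℝ, 1 < R →
        ENNReal.ofReal Ctil *
            (∫⁻ u in Set.Ioi R,
              ENNReal.ofReal (Real.exp (2 * (((∑ j, α j : ℕ) : ℝ) - m - 1) * u)))
          ≤ tailIntegral m n α R ∧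
        tailIntegral m n α R ≤
          ENNReal.ofReal Cα *
            (∫⁻ u in Set.Ioi R,
              ENNReal.ofReal (Real.exp (2 * (((∑ j, α j : ℕ) : ℝ) - m - 1) * u)))) ∧
    ((∑ j, α j ≤ m →
        (∀ R : ℝ, 1 < R → tailIntegral m n α R < ⊤) ∧
        Filter.Tendsto (tailIntegral m n α) Filter.atTop (nhds 0)) ∧
      (m + 1 ≤ ∑ j, α j → ∀ R : ℝ, 1 < R → tailIntegral m n α R = ⊤)) :=
  stmt6_general m n hn α
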